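/- For an alternating (genus-zero atom) link diagram, all one-circle states s ∈ K₁ have the same number r(s) of B-smoothings, namely r(s) = x − 1 = n + 1 − y, where x and y are the circle counts of the all-A and all-B states and n the number of crossings. -/
import Mathlib


/-- The number `r(s)` of B-smoothings of a state `s : Fin n → Bool`. -/
def numB {n : ℕ} (s : Fin n → Bool) : ℕ := (Finset.univ.filter fun i => s i).card

lemma gamma_lower {n : ℕ} (γ : (Fin n → Bool) → ℕ)
    (hadj : ∀ (s : Fin n → Bool) (i : Fin n),
      γ (Function.update s i (!s i)) = γ s + 1 ∨ γ s = γ (Function.update s i (!s i)) + 1) :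
    ∀ (k : ℕ) (s t : Fin n → Bool),
      (Finset.univ.filter fun i => s i ≠ t i).card = k →
      (γ t : ℤ) - k ≤ γ s := by
  intro k
  induction k with
  | zero =>
    intro s t hc
    have hst : s = t := by
      funext i
      by_contra h
      have hmem : i ∈ Finset.univ.filter fun i => s i ≠ t i := by simp [h]
      have := Finset.card_pos.mpr ⟨i, hmem⟩
      omega
    simp [hst]
  | succ k ih =>
    intro s t hc
    have hne : (Finset.univ.filter fun i => s i ≠ t i).Nonempty := by
      rw [← Finset.card_pos, hc]; omega
    obtain ⟨i, hi⟩ := hne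
    have hi' : s i ≠ t i := by simpa using hi
    have hcard : (Finset.univ.filter fun j => s j ≠ (Function.update t i (!t i)) j).card = k := by
      have heq : (Finset.univ.filter fun j => s j ≠ (Function.update t i (!t i)) j)
          = (Finset.univ.filter fun j => s j ≠ t j).erase i := by
        ext j
        by_cases hji : j = i
        · subst hji
          simp only [Finset.mem_filter, Finset.mem_univ, true_and, Function.update_self,
            Finset.mem_erase, ne_eq, not_true_eq_false, false_and, iff_false]
          cases h1 : s j <;> cases h2 : t j <;> simp_all
        · simp [Function.update_of_ne hji, hji]
      rw [heq, Finset.card_erase_of_mem hi, hc]; omega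
    have h1 := ih s (Function.update t i (!t i)) hcard
    have h2 := hadj t i
    rcases h2 with h | h <;> omega

/-- for an alternating (genus-zero atom, i.e. `x + y = n + 2`) link diagram,
all one-circle states `s ∈ K₁` have the same number of B-smoothings, namely
`r(s) = x - 1 = n + 1 - y`. -/
theorem r_constant_for_alternating (n : ℕ) (γ : (Fin n → Bool) → ℕ)
    (hadj : ∀ (s : Fin n → Bool) (i : Fin n),
      γ (Function.update s i (!s i)) = γ s + 1 ∨ γ s = γ (Function.update s i (!s i)) + 1)
    (x y : ℕ)
    (hx : γ (fun _ => false) = x) (hy : γ (fun _ => true) = y)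
    (hgenus0 : x + y = n + 2) :
    ∀ s : Fin n → Bool, γ s = 1 →
      (numB s : ℤ) = (x : ℤ) - 1 ∧ (numB s : ℤ) = (n : ℤ) + 1 - (y : ℤ) := by
  intro s hs
  have hle : numB s ≤ n := by
    have := Finset.card_filter_le (Finset.univ : Finset (Fin n)) (fun i => s i = true)
    simpa [numB] using this
  have hc1 : (Finset.univ.filter fun i => s i ≠ (fun _ => false) i).card = numB s := by
    simp [numB]
  have hc2 : (Finset.univ.filter fun i => s i ≠ (fun _ => true) i).card = n - numB s := by
    have : (Finset.univ.filter fun i => s i ≠ (fun _ => true) i)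
        = Finset.univ \ (Finset.univ.filter fun i => s i = true) := by
      ext j; simp
    rw [this, Finset.card_sdiff_of_subset (Finset.filter_subset _ _)]
    simp [numB]
  have h1 := gamma_lower γ hadj (numB s) s (fun _ => false) hc1
  have h2 := gamma_lower γ hadj (n - numB s) s (fun _ => true) hc2
  rw [hx, hs] at h1
  rw [hy, hs] at h2
  have : ((n - numB s : ℕ) : ℤ) = (n : ℤ) - numB s := by
    push_cast [hle]; ring
  omega
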